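/- arXiv:1405.0045 — 4 statements merged into one kernel-verified Lean document; each statement's English description precedes it below -/
import Mathlib

section
/- Let p be an odd prime, η a primitive p-th root of unity in ℂ, and define ω = Σ{η^n : 1 ≤ n ≤ p−1, n is a quadratic residue mod p} and ω' = Σ{η^n : 1 ≤ n ≤ p−1, n is a quadratic nonresidue mod p}. Then ω + ω' = −1 and ω·ω' = (1 − χ(−1)p)/4, where χ(−1) = (−1)^((p−1)/2) is the Legendre symbol of −1. Consequently {ω, ω'} = {(−1 ± √(χ(−1)p))/2} for some choice of square root. -/
/-!
The difference ω - ω' is the quadratic Gauss sum `∑ₐ χ(a) ψ(a)` for the additive character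
`ψ(a) = η^a`, whose square is `χ(-1) p`, while ω + ω' is the sum of all nontrivial `p`-th roots
of unity, i.e. `-1`. The product and the two values then follow from Vieta's formulas.
-/

open Finset

section QuadraticChar

variable {F : Type*} [Field F] [Fintype F] [DecidableEq F]

theorem quadraticChar_eq_one_iff_exists_sq_eq {a : F} :
    quadraticChar F a = 1 ↔ ∃ m, m ≠ 0 ∧ m ^ 2 = a := by
  by_cases ha : a = 0
  · subst ha
    simp
  · rw [quadraticChar_one_iff_isSquare ha]
    refine ⟨fun ⟨m, hm⟩ => ⟨m, ?_, by rw [hm, sq]⟩, fun ⟨m, _, hm⟩ => ⟨m, by rw [← hm, sq]⟩⟩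
    rintro rfl
    exact ha (by simpa using hm)

theorem quadraticChar_eq_neg_one_iff_not_exists_sq_eq {a : F} :
    quadraticChar F a = -1 ↔ ¬∃ m, m ^ 2 = a := by
  rw [quadraticChar_neg_one_iff_not_isSquare]
  simp only [IsSquare, sq, eq_comm]

theorem sum_quadraticChar_mul {R : Type*} [CommRing R] (f : F → R) :
    ∑ a, (quadraticChar F a : R) * f a
      = ∑ a ∈ univ.filter (quadraticChar F · = 1), f a
        - ∑ a ∈ univ.filter (quadraticChar F · = -1), f a := by
  rw [sum_filter, sum_filter, ← sum_sub_distrib]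
  refine sum_congr rfl fun a _ => ?_
  by_cases ha : a = 0
  · simp [ha]
  · rcases quadraticChar_dichotomy ha with h | h <;> simp [h]

variable {R : Type*} [CommRing R] [IsDomain R] {ψ : AddChar F R}

theorem sum_quadraticChar_eq_one_add_sum_eq_neg_one (hψ : ψ ≠ 1) :
    ∑ a ∈ univ.filter (quadraticChar F · = 1), ψ a
      + ∑ a ∈ univ.filter (quadraticChar F · = -1), ψ a = -1 := by
  have hzero := AddChar.sum_eq_zero_of_ne_one hψ
  rw [← add_sum_erase _ _ (mem_univ 0), AddChar.map_zero_eq_one, ← filter_ne', sum_filter]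
    at hzero
  rw [sum_filter, sum_filter, ← sum_add_distrib, eq_neg_iff_add_eq_zero, add_comm]
  convert hzero using 2
  refine sum_congr rfl fun a _ => ?_
  by_cases ha : a = 0
  · simp [ha]
  · rcases quadraticChar_dichotomy ha with h | h <;> simp [h, ha]

theorem sq_sum_quadraticChar_eq_one_sub_sum_eq_neg_one [CharZero R] (hF : ringChar F ≠ 2)
    (hψ : ψ.IsPrimitive) :
    (∑ a ∈ univ.filter (quadraticChar F · = 1), ψ a
      - ∑ a ∈ univ.filter (quadraticChar F · = -1), ψ a) ^ 2
      = quadraticChar F (-1) * Fintype.card F := by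
  set χ := (quadraticChar F).ringHomComp (Int.castRingHom R)
  have hχ : χ ≠ 1 := (MulChar.ringHomComp_ne_one_iff (Int.castRingHom R).injective_int).mpr
    (quadraticChar_ne_one hF)
  rw [← sum_quadraticChar_mul]
  exact gaussSum_sq hχ ((quadraticChar_isQuadratic F).comp _) hψ

end QuadraticChar

namespace ZMod

variable {p : ℕ}

theorem sum_filter_Ioo_pow [NeZero p] {C : Type*} [CommSemiring C] {ζ : C} (hζ : ζ ^ p = 1)
    (P : ZMod p → Prop) [DecidablePred P] (hP : ¬P 0) :
    ∑ n ∈ (Ioo 0 p).filter (fun n : ℕ => P n), ζ ^ n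
      = ∑ a ∈ univ.filter P, AddChar.zmodChar p hζ a := by
  refine sum_nbij' (fun n => (n : ZMod p)) (fun a => a.val) ?_ ?_ ?_ ?_ ?_
  · intro n hn
    simpa using (mem_filter.mp hn).2
  · intro a ha
    have hPa := (mem_filter.mp ha).2
    have ha0 : a ≠ 0 := by rintro rfl; exact hP hPa
    simp [ZMod.val_pos.mpr ha0, ZMod.val_lt a, hPa]
  · intro n hn
    exact ZMod.val_cast_of_lt (Finset.mem_Ioo.mp (mem_filter.mp hn).1).2
  · intro a _
    simp
  · intro n _
    exact (AddChar.zmodChar_apply' hζ n).symm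

theorem quadraticChar_neg_one_eq_neg_one_pow [Fact p.Prime] (hp : p ≠ 2) :
    quadraticChar (ZMod p) (-1) = (-1) ^ ((p - 1) / 2) := by
  have hodd : p % 2 = 1 := Nat.odd_iff.mp ((Fact.out : p.Prime).odd_of_ne_two hp)
  rw [quadraticChar_neg_one (by rwa [ZMod.ringChar_zmod_n]), ZMod.card, χ₄_eq_neg_one_pow hodd]
  congr 1
  omega

end ZMod

open Classical

/-- For p an odd prime and η a primitive p-th root of unity in ℂ, with
ω the sum of η^n over quadratic residues n (1 ≤ n ≤ p−1) and ω' the sum over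
nonresidues, we have ω + ω' = −1 and ω·ω' = (1 − χ(−1)p)/4 where χ(−1)=(−1)^((p−1)/2);
consequently {ω, ω'} = {(−1 ± √(χ(−1)p))/2}. -/
theorem stmt_3 (p : ℕ) (hp : p.Prime) (hodd : Odd p) (η : ℂ)
    (hη : IsPrimitiveRoot η p) (ω ω' : ℂ)
    (hω : ω = ∑ n ∈ (Finset.Ioo 0 p).filter
        (fun n : ℕ => ∃ m : ZMod p, m ≠ 0 ∧ m ^ 2 = (n : ZMod p)), η ^ (n : ℕ))
    (hω' : ω' = ∑ n ∈ (Finset.Ioo 0 p).filter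
        (fun n : ℕ => ¬ ∃ m : ZMod p, m ^ 2 = (n : ZMod p)), η ^ (n : ℕ)) :
    ω + ω' = -1 ∧
    ω * ω' = (1 - (-1 : ℂ) ^ ((p - 1) / 2) * p) / 4 ∧
    ∃ s : ℂ, s ^ 2 = (-1 : ℂ) ^ ((p - 1) / 2) * p ∧
      ({ω, ω'} : Set ℂ) = {(-1 + s) / 2, (-1 - s) / 2} := by
  have := Fact.mk hp
  have hp2 : p ≠ 2 := by rintro rfl; exact absurd hodd (by decide)
  set ψ := AddChar.zmodChar p hη.pow_eq_one
  have hψ : ψ.IsPrimitive := AddChar.zmodChar_primitive_of_primitive_root p hη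
  have hωψ : ω = ∑ a ∈ univ.filter (quadraticChar (ZMod p) · = 1), ψ a := by
    rw [hω, ← ZMod.sum_filter_Ioo_pow _ _ (by simp)]
    congr 1
    ext n
    simp only [mem_filter, quadraticChar_eq_one_iff_exists_sq_eq]
  have hω'ψ : ω' = ∑ a ∈ univ.filter (quadraticChar (ZMod p) · = -1), ψ a := by
    rw [hω', ← ZMod.sum_filter_Ioo_pow _ _ (by simp)]
    congr 1
    ext n
    simp only [mem_filter, quadraticChar_eq_neg_one_iff_not_exists_sq_eq]
  have hsum : ω + ω' = -1 := by
    rw [hωψ, hω'ψ]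
    exact sum_quadraticChar_eq_one_add_sum_eq_neg_one
      fun h => hψ one_ne_zero (by rw [AddChar.mulShift_one, h])
  have hsq : (ω - ω') ^ 2 = (-1 : ℂ) ^ ((p - 1) / 2) * p := by
    rw [hωψ, hω'ψ, sq_sum_quadraticChar_eq_one_sub_sum_eq_neg_one
      (by rwa [ZMod.ringChar_zmod_n]) hψ, ZMod.quadraticChar_neg_one_eq_neg_one_pow hp2,
      ZMod.card]
    norm_cast
  refine ⟨hsum, ?_, ω - ω', hsq, ?_⟩
  · linear_combination (hsum * (ω + ω' - 1) - hsq) / 4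
  · rw [show (-1 + (ω - ω')) / 2 = ω by linear_combination -hsum / 2,
      show (-1 - (ω - ω')) / 2 = ω' by linear_combination -hsum / 2]
end

section
/- Let G be a finite abelian group of order v and D ⊂ G a GSHDS with k₀ = 0 (i.e., D(x)D(x^{n₀}) = −λ·1 + λ·G(x) and D(x) + D(x^{n₀}) = G(x) − 1). Then D(x^{−1}) = D(x), and D is a partial difference set with parameters (v, (v−1)/2, (v−5)/4, (v−1)/4) (Paley parameters); moreover λ = (v−1)/4. -/
open Finset

/-- `DS n D` represents `D(xⁿ) = ∑_{g ∈ D} x^{n·g}` in the integral group algebra `ℤ[G]`. -/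
noncomputable def DS {G : Type} [AddCommGroup G] (n : ℤ) (D : Finset G) :
    AddMonoidAlgebra ℤ G := ∑ g ∈ D, AddMonoidAlgebra.single (n • g) 1

/-- `GS G` represents `G(x) = ∑_{g ∈ G} x^g` in `ℤ[G]`. -/
noncomputable def GS (G : Type) [AddCommGroup G] [Fintype G] :
    AddMonoidAlgebra ℤ G := ∑ g : G, AddMonoidAlgebra.single g 1

/-!
Comparing coefficients of `1` in `D(x)D(x^{n₀}) = λ(G(x) - 1)` shows `a + n₀b ≠ 0` for all
`a, b ∈ D`, while `D(x) + D(x^{n₀}) = G(x) - 1` says that `0 ∉ D` and that every nonzero `x ∉ D`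
is `n₀b` for some `b ∈ D`. So `g ∈ D` with `-g ∉ D` would give `g + n₀b = 0`: hence `D = -D`.
Applying the augmentation gives `2k = v - 1` and `k² = λ(v - 1)`, so `k = 2λ` as soon as `G` is
nontrivial, which it is because `n₀` is a nonsquare modulo `exp G`. Finally
`D(x)² = D(x)(G(x) - 1 - D(x^{n₀})) = kG(x) - D(x) - λ(G(x) - 1)`, which is the Paley equation.
-/

open AddMonoidAlgebra

section GroupRing

variable {G : Type} [AddCommGroup G]

noncomputable def augmentation (G : Type) [AddCommGroup G] : AddMonoidAlgebra ℤ G →ₐ[ℤ] ℤ :=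
  AddMonoidAlgebra.lift ℤ ℤ G 1

lemma augmentation_single (a : G) (b : ℤ) : augmentation G (single a b) = b := by
  simp [augmentation]

lemma augmentation_DS (n : ℤ) (D : Finset G) : augmentation G (DS n D) = #D := by
  simp [DS, augmentation_single]

lemma augmentation_GS [Fintype G] : augmentation G (GS G) = Fintype.card G := by
  simp [GS, augmentation_single]

lemma coeff_GS [Fintype G] (x : G) : (GS G).coeff x = 1 := by
  simp [GS, coeff_sum, coeff_single]

lemma coeff_DS [DecidableEq G] (n : ℤ) (D : Finset G) (x : G) :
    (DS n D).coeff x = #{g ∈ D | n • g = x} := by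
  simp [DS, coeff_sum, coeff_single, Finsupp.single_apply]

lemma coeff_DS_one [DecidableEq G] (D : Finset G) (x : G) :
    (DS 1 D).coeff x = if x ∈ D then 1 else 0 := by
  rw [coeff_DS]
  simp only [one_zsmul, Finset.filter_eq']
  split_ifs <;> simp

lemma coeff_DS_mul_DS [DecidableEq G] (m n : ℤ) (D E : Finset G) (x : G) :
    (DS m D * DS n E).coeff x = #{p ∈ D ×ˢ E | m • p.1 + n • p.2 = x} := by
  rw [Finset.card_filter, Finset.sum_product]
  simp [DS, Finset.sum_mul_sum, single_mul_single, coeff_sum, coeff_single, Finsupp.single_apply]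

lemma DS_neg_one_of_neg_mem {D : Finset G} (hD : ∀ g ∈ D, -g ∈ D) : DS (-1) D = DS 1 D := by
  simp only [DS, neg_one_zsmul, one_zsmul]
  exact Finset.sum_nbij' Neg.neg Neg.neg hD hD (fun a _ => neg_neg a) (fun a _ => neg_neg a)
    fun _ _ => rfl

lemma single_one_mul_GS [Fintype G] (a : G) : single a (1 : ℤ) * GS G = GS G := by
  simp only [GS, Finset.mul_sum, single_mul_single, one_mul]
  exact Fintype.sum_equiv (Equiv.addLeft a) _ _ fun _ => rfl

lemma DS_mul_GS [Fintype G] (n : ℤ) (D : Finset G) : DS n D * GS G = (#D : ℤ) • GS G := by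
  simp [DS, Finset.sum_mul, single_one_mul_GS]

end GroupRing

lemma nontrivial_of_not_exists_sq_eq {G : Type} [AddCommGroup G] {n : ℤ}
    (h : ¬ ∃ m : ZMod (AddMonoid.exponent G), m ^ 2 = n) : Nontrivial G := by
  by_contra hG
  have : Subsingleton G := not_nontrivial_iff_subsingleton.mp hG
  rw [AddMonoid.exp_eq_one_of_subsingleton] at h
  exact h ⟨0, Subsingleton.elim _ _⟩

section GSHDS

variable {G : Type} [AddCommGroup G] [Fintype G] {D : Finset G} {n₀ lam : ℤ}

/-- A GSHDS with multiplier `n₀`, `k₀ = 0` and `λ = lam`. -/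
structure IsGSHDS (D : Finset G) (n₀ lam : ℤ) : Prop where
  mul_eq : DS 1 D * DS n₀ D = (-lam) • (1 : AddMonoidAlgebra ℤ G) + lam • GS G
  add_eq : DS 1 D + DS n₀ D = GS G - 1

lemma ite_mem_add_card_smul_eq_of_DS_add_DS_eq [DecidableEq G]
    (h2 : DS 1 D + DS n₀ D = GS G - 1) (x : G) :
    (if x ∈ D then 1 else 0) + (#{g ∈ D | n₀ • g = x} : ℤ) = if x = 0 then 0 else 1 := by
  have := congrArg (fun f : AddMonoidAlgebra ℤ G => f.coeff x) h2
  rw [coeff_add, coeff_sub, Finsupp.add_apply, Finsupp.sub_apply, coeff_DS_one, coeff_DS,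
    coeff_GS, one_def, coeff_single, Finsupp.single_apply] at this
  rw [this]
  by_cases hx : x = 0 <;> simp [hx, eq_comm]

lemma zero_notMem_of_DS_add_DS_eq (h2 : DS 1 D + DS n₀ D = GS G - 1) : (0 : G) ∉ D := by
  classical
  intro h0
  have := ite_mem_add_card_smul_eq_of_DS_add_DS_eq h2 0
  simp only [h0, if_true] at this
  omega

lemma exists_smul_eq_of_DS_add_DS_eq (h2 : DS 1 D + DS n₀ D = GS G - 1) {x : G} (hx : x ≠ 0)
    (hxD : x ∉ D) : ∃ b ∈ D, n₀ • b = x := by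
  classical
  have := ite_mem_add_card_smul_eq_of_DS_add_DS_eq h2 x
  simp only [hx, hxD, if_false, zero_add, Nat.cast_eq_one] at this
  obtain ⟨b, hb⟩ := Finset.card_pos.mp (by rw [this]; exact one_pos)
  exact ⟨b, Finset.mem_filter.mp hb⟩

lemma add_smul_ne_zero_of_DS_mul_DS_eq
    (h1 : DS 1 D * DS n₀ D = (-lam) • (1 : AddMonoidAlgebra ℤ G) + lam • GS G)
    {a b : G} (ha : a ∈ D) (hb : b ∈ D) : a + n₀ • b ≠ 0 := by
  classical
  have := congrArg (fun f : AddMonoidAlgebra ℤ G => f.coeff 0) h1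
  simp only [coeff_DS_mul_DS, coeff_add, Finsupp.add_apply, coeff_smul_apply, coeff_GS, one_def,
    coeff_single, Finsupp.single_apply, if_true, smul_eq_mul, mul_one, neg_add_cancel,
    Nat.cast_eq_zero, Finset.card_eq_zero, Finset.filter_eq_empty_iff, one_zsmul] at this
  exact this (x := (a, b)) (Finset.mem_product.mpr ⟨ha, hb⟩)

lemma two_mul_card_add_one_eq_card (h2 : DS 1 D + DS n₀ D = GS G - 1) :
    2 * (#D : ℤ) + 1 = Fintype.card G := by
  have := congrArg (augmentation G) h2
  simp only [map_add, map_sub, map_one, augmentation_DS, augmentation_GS] at this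
  linarith

lemma card_mul_card_eq
    (h1 : DS 1 D * DS n₀ D = (-lam) • (1 : AddMonoidAlgebra ℤ G) + lam • GS G) :
    (#D : ℤ) * #D = lam * (Fintype.card G - 1) := by
  have := congrArg (augmentation G) h1
  simp only [map_mul, map_add, map_zsmul, map_one, augmentation_DS, augmentation_GS,
    smul_eq_mul] at this
  linarith

namespace IsGSHDS

lemma neg_mem (hD : IsGSHDS D n₀ lam) {g : G} (hg : g ∈ D) : -g ∈ D := by
  by_contra hng
  have hg0 : -g ≠ 0 :=
    neg_ne_zero.mpr fun h => zero_notMem_of_DS_add_DS_eq hD.add_eq (h ▸ hg)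
  obtain ⟨b, hb, hbg⟩ := exists_smul_eq_of_DS_add_DS_eq hD.add_eq hg0 hng
  exact add_smul_ne_zero_of_DS_mul_DS_eq hD.mul_eq hg hb (by rw [hbg, add_neg_cancel])

lemma card_eq_two_mul [Nontrivial G] (hD : IsGSHDS D n₀ lam) : (#D : ℤ) = 2 * lam := by
  have hv := two_mul_card_add_one_eq_card hD.add_eq
  have hk0 : (#D : ℤ) ≠ 0 := by
    have := Fintype.one_lt_card (α := G)
    omega
  refine mul_right_cancel₀ hk0 ?_
  rw [card_mul_card_eq hD.mul_eq, ← hv]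
  ring

lemma DS_mul_self (hD : IsGSHDS D n₀ lam) (hk : (#D : ℤ) = 2 * lam) :
    DS 1 D * DS 1 D = lam • (1 : AddMonoidAlgebra ℤ G) - DS 1 D + lam • GS G := by
  have hDG := DS_mul_GS 1 D
  rw [hk] at hDG
  have hcompl : DS 1 D = GS G - 1 - DS n₀ D := by rw [← hD.add_eq]; abel
  calc DS 1 D * DS 1 D = DS 1 D * GS G - DS 1 D - DS 1 D * DS n₀ D := by
        nth_rewrite 2 [hcompl]; ring
    _ = _ := by rw [hDG, hD.mul_eq]; module

end IsGSHDS

end GSHDS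

theorem stmt_5_general (G : Type) [AddCommGroup G] [Fintype G]
    (D : Finset G) (n₀ lam v : ℤ) (hv : v = (Fintype.card G : ℤ))
    (hnres : ¬ ∃ m : ZMod (AddMonoid.exponent G),
      m ^ 2 = (n₀ : ZMod (AddMonoid.exponent G)))
    (h1 : DS 1 D * DS n₀ D
        = (-lam) • (1 : AddMonoidAlgebra ℤ G) + lam • GS G)
    (h2 : DS 1 D + DS n₀ D = GS G - 1) :
    DS (-1) D = DS 1 D ∧
    lam = (v - 1) / 4 ∧
    DS 1 D * DS (-1) D = (D.card : ℤ) • (1 : AddMonoidAlgebra ℤ G)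
      + ((v - 5) / 4) • DS 1 D + ((v - 1) / 4) • (GS G - 1 - DS 1 D) := by
  have := nontrivial_of_not_exists_sq_eq hnres
  have hD : IsGSHDS D n₀ lam := ⟨h1, h2⟩
  have hsymm : DS (-1) D = DS 1 D := DS_neg_one_of_neg_mem fun _ => hD.neg_mem
  have hk := hD.card_eq_two_mul
  have hvk := two_mul_card_add_one_eq_card h2
  have hlam : lam = (v - 1) / 4 := by omega
  refine ⟨hsymm, hlam, ?_⟩
  rw [hsymm, hD.DS_mul_self hk, ← hlam, show (v - 5) / 4 = lam - 1 by omega, hk]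
  module

/-- A GSHDS D with k₀ = 0 satisfies D(x⁻¹) = D(x) and is a Paley-type
partial difference set with parameters (v, (v−1)/2, (v−5)/4, (v−1)/4); moreover
λ = (v−1)/4. -/
theorem stmt_5 (G : Type) [AddCommGroup G] [Fintype G]
    (D : Finset G) (n₀ lam v : ℤ) (hv : v = (Fintype.card G : ℤ))
    (hunit : IsUnit (n₀ : ZMod (AddMonoid.exponent G)))
    (hnres : ¬ ∃ m : ZMod (AddMonoid.exponent G),
      m ^ 2 = (n₀ : ZMod (AddMonoid.exponent G)))
    (hk : (D.card : ℤ) = (v - 1) / 2)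
    (h1 : DS 1 D * DS n₀ D
        = (-lam) • (1 : AddMonoidAlgebra ℤ G) + lam • GS G)
    (h2 : DS 1 D + DS n₀ D = GS G - 1) :
    DS (-1) D = DS 1 D ∧
    lam = (v - 1) / 4 ∧
    DS 1 D * DS (-1) D = (D.card : ℤ) • (1 : AddMonoidAlgebra ℤ G)
      + ((v - 5) / 4) • DS 1 D + ((v - 1) / 4) • (GS G - 1 - DS 1 D) :=
  stmt_5_general G D n₀ lam v hv hnres h1 h2
end

section
/- Let G be a finite abelian group admitting a GSHDS D. Then |G| is not a perfect square. -/
open Finset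

/-!
Write `E = D - D^{(n₀)}` in `ℤ[G]`. The skew condition `D + D^{(n₀)} = G - 1` forces the
coefficients of `E` to be `±1` off the identity and `0` at it, and together with the product
condition it gives `χ(E)² = d := 1 - 4(k₀ - λ)` for every nonprincipal character `χ`. Parseval's
identity then yields `|d| = |G|`. If `|G| = m²`, then `d ≡ 1 (mod 4)` forces `d = m²`, so
`χ(E) = ±m` is rational and hence `χ(D) = (χ(E) - 1)/2` is rational too. Rational sums of roots of
unity are fixed by the Galois automorphism `ζ ↦ ζ^{n₀}`, so `χ(D^{(n₀)}) = χ(D)`, i.e. `χ(E) = 0`,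
which contradicts `χ(E)² = m² > 0`.
-/

section Galois

open Polynomial

theorem IsPrimitiveRoot.aeval_pow_eq_zero_of_coprime {K : Type*} [Field K] [CharZero K] {μ : K}
    {N n : ℕ} [NeZero N] (hμ : IsPrimitiveRoot μ N) (hn : n.Coprime N) {P : ℚ[X]}
    (hP : aeval μ P = 0) :
    aeval (μ ^ n) P = 0 := by
  have hmin : minpoly ℚ (μ ^ n) = minpoly ℚ μ := by
    rw [← cyclotomic_eq_minpoly_rat hμ (NeZero.pos N),
      cyclotomic_eq_minpoly_rat (hμ.pow_of_coprime n hn) (NeZero.pos N)]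
  rw [← minpoly.dvd_iff, hmin, minpoly.dvd_iff]
  exact hP

theorem sum_pow_eq_of_sum_eq_ratCast {ι : Type*} (s : Finset ι) {ζ : ι → ℂ} {N n : ℕ}
    [NeZero N] (hn : n.Coprime N) (hζ : ∀ i ∈ s, ζ i ^ N = 1) {q : ℚ}
    (hq : ∑ i ∈ s, ζ i = q) : ∑ i ∈ s, ζ i ^ n = q := by
  have hμ := Complex.isPrimitiveRoot_exp N (NeZero.ne N)
  set μ := Complex.exp (2 * Real.pi * Complex.I / N)
  have hlog : ∀ i ∈ s, ∃ a : ℕ, μ ^ a = ζ i := fun i hi =>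
    let ⟨a, _, ha⟩ := hμ.eq_pow_of_pow_eq_one (hζ i hi); ⟨a, ha⟩
  choose! a ha using hlog
  have key := hμ.aeval_pow_eq_zero_of_coprime hn
    (P := ∑ i ∈ s, X ^ a i - C q) (by simp [← hq, sum_congr rfl ha])
  have hpow : ∀ i ∈ s, (μ ^ n) ^ a i = ζ i ^ n := fun i hi => by
    rw [← ha i hi, ← pow_mul, ← pow_mul, mul_comm]
  simpa [sum_congr rfl hpow, sub_eq_zero] using key

theorem AddChar.map_zsmul_eq_pow_val {G : Type*} [AddCommGroup G] [Finite G]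
    (ψ : AddChar G ℂ) (n : ℤ) (g : G) :
    ψ (n • g) = ψ g ^ (n : ZMod (AddMonoid.exponent G)).val := by
  have : NeZero (AddMonoid.exponent G) := ⟨AddMonoid.exponent_ne_zero_of_finite⟩
  rw [← AddChar.map_nsmul_eq_pow, ← natCast_zsmul, ZMod.val_intCast]
  conv_lhs => rw [← Int.emod_add_mul_ediv n (AddMonoid.exponent G)]
  rw [add_zsmul, mul_comm, mul_zsmul, natCast_zsmul, AddMonoid.exponent_nsmul_eq_zero,
    zsmul_zero, add_zero]

theorem AddChar.sum_apply_zsmul_eq_of_sum_eq_ratCast {G : Type*} [AddCommGroup G] [Finite G]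
    (ψ : AddChar G ℂ) (D : Finset G) {n : ℤ} (hn : IsUnit (n : ZMod (AddMonoid.exponent G)))
    {q : ℚ} (hq : ∑ g ∈ D, ψ g = q) : ∑ g ∈ D, ψ (n • g) = q := by
  have : NeZero (AddMonoid.exponent G) := ⟨AddMonoid.exponent_ne_zero_of_finite⟩
  have hcop : (n : ZMod (AddMonoid.exponent G)).val.Coprime (AddMonoid.exponent G) := by
    rwa [← ZMod.isUnit_iff_coprime, ZMod.natCast_zmod_val]
  simp only [ψ.map_zsmul_eq_pow_val]
  refine sum_pow_eq_of_sum_eq_ratCast D hcop (fun g _ => ?_) hq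
  rw [← AddChar.map_nsmul_eq_pow, AddMonoid.exponent_nsmul_eq_zero, AddChar.map_zero_eq_one]

end Galois

section CharEval

variable {G : Type*} [AddCommGroup G]

noncomputable def charEval (ψ : AddChar G ℂ) : AddMonoidAlgebra ℤ G →ₐ[ℤ] ℂ :=
  AddMonoidAlgebra.lift ℤ ℂ G ψ.toMonoidHom

theorem charEval_single (ψ : AddChar G ℂ) (g : G) (r : ℤ) :
    charEval ψ (AddMonoidAlgebra.single g r) = r * ψ g := by
  simp [charEval, zsmul_eq_mul]

theorem charEval_apply [Fintype G] (ψ : AddChar G ℂ) (x : AddMonoidAlgebra ℤ G) :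
    charEval ψ x = ∑ g, x.coeff g * ψ g := by
  rw [charEval, AddMonoidAlgebra.lift_apply, Finsupp.sum_fintype _ _ (by simp)]
  simp [zsmul_eq_mul]

theorem sum_norm_charEval_sq [Fintype G] (x : AddMonoidAlgebra ℤ G) :
    ∑ ψ : AddChar G ℂ, ‖charEval ψ x‖ ^ 2 = Fintype.card G * ∑ g, (x.coeff g : ℝ) ^ 2 := by
  classical
  have horth : ∀ a b : G, ∑ ψ : AddChar G ℂ, ψ a * ψ (-b) =
      if a = b then (Fintype.card G : ℂ) else 0 := fun a b => by
    simp_rw [← AddChar.map_add_eq_mul, AddChar.sum_apply_eq_ite, ← sub_eq_add_neg, sub_eq_zero]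
  apply Complex.ofReal_injective
  push_cast
  simp_rw [← Complex.mul_conj', charEval_apply, map_sum, map_mul, map_intCast,
    ← AddChar.map_neg_eq_conj, sum_mul_sum, sum_comm (γ := AddChar G ℂ),
    mul_mul_mul_comm _ (_ : ℂ) (x.coeff _ : ℂ), ← mul_sum, horth, mul_ite, mul_zero, sum_ite_eq,
    mem_univ, if_true, mul_sum]
  exact sum_congr rfl fun g _ => by ring

end CharEval

theorem one_sub_four_mul_eq_sq_of_abs_eq {c m : ℤ} (h : |1 - 4 * c| = m ^ 2) :
    1 - 4 * c = m ^ 2 := by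
  rcases abs_choice (1 - 4 * c) with habs | habs
  · rwa [habs] at h
  · rw [habs] at h
    rcases Int.even_or_odd' m with ⟨j, rfl | rfl⟩
    all_goals
      ring_nf at h
      omega

theorem one_lt_card_of_not_exists_sq {G : Type*} [AddCommGroup G] [Fintype G] {n : ℤ}
    (h : ¬∃ m : ZMod (AddMonoid.exponent G), m ^ 2 = n) : 1 < Fintype.card G := by
  rw [Fintype.one_lt_card_iff_nontrivial, ← not_subsingleton_iff_nontrivial,
    ← AddMonoid.exp_eq_one_iff]
  intro hexp
  rw [hexp] at h
  exact h ⟨0, Subsingleton.elim _ _⟩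

section GSHDS

variable {G : Type} [AddCommGroup G]

theorem charEval_DS (ψ : AddChar G ℂ) (n : ℤ) (D : Finset G) :
    charEval ψ (DS n D) = ∑ g ∈ D, ψ (n • g) := by
  simp [DS, charEval_single]

theorem coeff_DS_nonneg (n : ℤ) (D : Finset G) (g : G) : 0 ≤ (DS n D).coeff g := by
  classical
  simp only [DS, AddMonoidAlgebra.coeff_sum, Finsupp.finsetSum_apply,
    AddMonoidAlgebra.coeff_single, Finsupp.single_apply]
  exact sum_nonneg fun _ _ => by positivity

variable [Fintype G]

theorem charEval_GS_of_ne_zero {ψ : AddChar G ℂ} (hψ : ψ ≠ 0) : charEval ψ (GS G) = 0 := by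
  simpa [GS, charEval_single] using AddChar.sum_eq_zero_iff_ne_zero.mpr hψ

theorem coeff_GS_sub_one_le_one (g : G) : (GS G - 1).coeff g ≤ 1 := by
  classical
  simp only [GS, AddMonoidAlgebra.one_def, AddMonoidAlgebra.coeff_sub, AddMonoidAlgebra.coeff_sum,
    AddMonoidAlgebra.coeff_single, Finsupp.coe_sub, Finsupp.coe_finsetSum, Pi.sub_apply,
    Finset.sum_apply, Finsupp.single_apply, sum_ite_eq', mem_univ, if_true, tsub_le_iff_right,
    le_add_iff_nonneg_right]
  positivity

theorem sum_coeff_GS_sub_one : ∑ g, (GS G - 1).coeff g = Fintype.card G - 1 := by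
  classical
  simp [GS, AddMonoidAlgebra.coeff_sum, AddMonoidAlgebra.coeff_single, Finsupp.single_apply,
    AddMonoidAlgebra.one_def]

variable {D : Finset G} {n k₀ lam : ℤ}

theorem sum_sq_coeff_DS_sub_DS (h2 : DS 1 D + DS n D = GS G - 1) :
    ∑ g, ((DS 1 D - DS n D).coeff g) ^ 2 = Fintype.card G - 1 := by
  rw [← sum_coeff_GS_sub_one, ← h2]
  refine sum_congr rfl fun g _ => ?_
  have hle := coeff_GS_sub_one_le_one (G := G) g
  rw [← h2] at hle
  have ha := coeff_DS_nonneg 1 D g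
  have hb := coeff_DS_nonneg n D g
  simp only [AddMonoidAlgebra.coeff_add, AddMonoidAlgebra.coeff_sub, Finsupp.add_apply,
    Finsupp.sub_apply] at hle ⊢
  -- two nonnegative integers with sum at most `1`: one of them is `0`, so `(a - b)² = a + b`
  generalize (DS 1 D).coeff g = a at *
  generalize (DS n D).coeff g = b at *
  obtain ⟨rfl, rfl⟩ | ⟨rfl, rfl⟩ | ⟨rfl, rfl⟩ : a = 0 ∧ b = 0 ∨ a = 1 ∧ b = 0 ∨ a = 0 ∧ b = 1 := by
    omega
  all_goals norm_num

theorem charEval_DS_add_DS_of_ne_zero {ψ : AddChar G ℂ} (hψ : ψ ≠ 0)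
    (h2 : DS 1 D + DS n D = GS G - 1) :
    charEval ψ (DS 1 D) + charEval ψ (DS n D) = -1 := by
  simpa [charEval_GS_of_ne_zero hψ] using congrArg (charEval ψ) h2

theorem charEval_DS_sub_DS_sq_of_ne_zero {ψ : AddChar G ℂ} (hψ : ψ ≠ 0)
    (h1 : DS 1 D * DS n D = (k₀ - lam) • (1 : AddMonoidAlgebra ℤ G) + lam • GS G)
    (h2 : DS 1 D + DS n D = GS G - 1) :
    charEval ψ (DS 1 D - DS n D) ^ 2 = ((1 - 4 * (k₀ - lam) : ℤ) : ℂ) := by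
  have hmul := congrArg (charEval ψ) h1
  simp only [map_mul, map_add, map_sub, map_intCast, zsmul_eq_mul, Int.cast_sub, mul_one,
    charEval_GS_of_ne_zero hψ, mul_zero, add_zero] at hmul
  rw [map_sub]
  push_cast
  linear_combination (charEval ψ (DS 1 D) + charEval ψ (DS n D) - 1) *
    charEval_DS_add_DS_of_ne_zero hψ h2 - 4 * hmul

theorem abs_one_sub_four_mul_eq_card
    (h1 : DS 1 D * DS n D = (k₀ - lam) • (1 : AddMonoidAlgebra ℤ G) + lam • GS G)
    (h2 : DS 1 D + DS n D = GS G - 1) (hG : 1 < Fintype.card G) :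
    |1 - 4 * (k₀ - lam)| = Fintype.card G := by
  classical
  set d := 1 - 4 * (k₀ - lam)
  have hnorm : ∀ ψ : AddChar G ℂ, ‖charEval ψ (DS 1 D - DS n D)‖ ^ 2 =
      |(d : ℝ)| - if ψ = 0 then |(d : ℝ)| else 0 := fun ψ => by
    rcases eq_or_ne ψ 0 with rfl | hψ
    · simp [charEval_DS]
    · rw [if_neg hψ, sub_zero, ← norm_pow, charEval_DS_sub_DS_sq_of_ne_zero hψ h1 h2]
      exact Complex.norm_intCast d
  have hparseval := sum_norm_charEval_sq (DS 1 D - DS n D)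
  simp only [hnorm, sum_sub_distrib, sum_const, card_univ, AddChar.card_eq, sum_ite_eq',
    mem_univ, if_true, nsmul_eq_mul] at hparseval
  have hsq : ∑ g, ((DS 1 D - DS n D).coeff g : ℝ) ^ 2 = Fintype.card G - 1 := by
    exact_mod_cast sum_sq_coeff_DS_sub_DS h2
  rw [hsq] at hparseval
  have hG' : (Fintype.card G : ℝ) - 1 ≠ 0 := by
    rw [sub_ne_zero]; exact_mod_cast hG.ne'
  have : |(d : ℝ)| = Fintype.card G :=
    mul_left_cancel₀ hG' (by linear_combination hparseval)
  exact_mod_cast this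

theorem charEval_DS_sub_DS_eq_zero_of_ratCast {ψ : AddChar G ℂ} (hψ : ψ ≠ 0)
    (hn : IsUnit (n : ZMod (AddMonoid.exponent G))) (h2 : DS 1 D + DS n D = GS G - 1) {q : ℚ}
    (hq : charEval ψ (DS 1 D - DS n D) = q) : charEval ψ (DS 1 D - DS n D) = 0 := by
  have hsum := charEval_DS_add_DS_of_ne_zero hψ h2
  rw [map_sub] at hq ⊢
  simp only [charEval_DS, one_smul] at hq hsum ⊢
  have hX : ∑ g ∈ D, ψ g = ((q - 1) / 2 : ℚ) := by
    push_cast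
    linear_combination (hq + hsum) / 2
  rw [ψ.sum_apply_zsmul_eq_of_sum_eq_ratCast D hn hX, hX, sub_self]

end GSHDS

/-- A finite abelian group admitting a GSHDS cannot have square order. -/
theorem stmt_9 (G : Type) [AddCommGroup G] [Fintype G]
    (D : Finset G) (n₀ k₀ lam : ℤ)
    (hunit : IsUnit (n₀ : ZMod (AddMonoid.exponent G)))
    (hnres : ¬ ∃ m : ZMod (AddMonoid.exponent G),
      m ^ 2 = (n₀ : ZMod (AddMonoid.exponent G)))
    (h1 : DS 1 D * DS n₀ D
        = (k₀ - lam) • (1 : AddMonoidAlgebra ℤ G) + lam • GS G)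
    (h2 : DS 1 D + DS n₀ D = GS G - 1) :
    ¬ ∃ m : ℕ, Fintype.card G = m ^ 2 := by
  rintro ⟨m, hm⟩
  have hG := one_lt_card_of_not_exists_sq hnres
  have hd : 1 - 4 * (k₀ - lam) = (m : ℤ) ^ 2 :=
    one_sub_four_mul_eq_sq_of_abs_eq <| by
      rw [abs_one_sub_four_mul_eq_card h1 h2 hG, hm]; norm_cast
  obtain ⟨ψ, hψ⟩ : ∃ ψ : AddChar G ℂ, ψ ≠ 0 :=
    Fintype.exists_ne_of_one_lt_card (by rwa [AddChar.card_eq]) 0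
  have hsq := charEval_DS_sub_DS_sq_of_ne_zero hψ h1 h2
  rw [hd] at hsq
  push_cast at hsq
  have hrat : ∃ q : ℚ, charEval ψ (DS 1 D - DS n₀ D) = q := by
    rcases sq_eq_sq_iff_eq_or_eq_neg.mp hsq with h | h
    · exact ⟨m, by rw [h]; norm_cast⟩
    · exact ⟨-m, by rw [h]; norm_cast⟩
  obtain ⟨q, hq⟩ := hrat
  rw [charEval_DS_sub_DS_eq_zero_of_ratCast hψ hunit h2 hq] at hsq
  have hm0 : m = 0 := by simpa using hsq.symm
  rw [hm, hm0] at hG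
  norm_num at hG
end

section
/- Let G be an abelian p-group of order p^{2α+1} (p odd) and D a QRS in G. Then D is a GSHDS if and only if p^α divides d_G(χ, D) for every nonprincipal character χ; in that case d_G(χ,D) = ±p^α for all nonprincipal χ. -/
open Finset

/-!
Evaluating the skew relation `D(x) + D(x^{n₀}) = G(x) - 1` under characters gives `|D| = (v - 1)/2`
and, for nonprincipal `χ`, `χ(D) χ(D^{n₀}) = -χ(D) - χ(D)² = (1 - ε p d_χ²)/4`. Summing over all
characters picks out `v` times the coefficient of `0` in `D(x) D(x^{n₀})`, which lies between `0`
and `|D|`; this bounds `∑_{χ ≠ 1} d_χ²` by `p^{2α} (v - 1)`. As `χ(D)` is an algebraic integer and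
`-1/2` is not, no `d_χ` vanishes, so if `p^α` divides every `d_χ` then each `d_χ² = p^{2α}`.
Since an element of `ℤ[G]` is determined by its character values, `D` is a GSHDS iff
`ε p d_χ² = ε v` for every nonprincipal `χ`, i.e. iff `d_χ = ±p^α`.
-/

namespace AddMonoidAlgebra

variable {G : Type} [AddCommGroup G]

noncomputable def evalChar (χ : AddChar G ℂ) : AddMonoidAlgebra ℤ G →ₐ[ℤ] ℂ :=
  lift ℤ ℂ G χ.toMonoidHom

@[simp]
lemma evalChar_single (χ : AddChar G ℂ) (a : G) : evalChar χ (single a 1) = χ a := by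
  simp [evalChar, lift_single]

lemma evalChar_DS (χ : AddChar G ℂ) (n : ℤ) (D : Finset G) :
    evalChar χ (DS n D) = ∑ g ∈ D, χ (n • g) := by
  simp [DS]

lemma evalChar_zero_DS (n : ℤ) (D : Finset G) : evalChar 0 (DS n D) = #D := by
  simp [evalChar_DS]

lemma coeff_DS_one [DecidableEq G] (D : Finset G) (a : G) :
    (DS 1 D).coeff a = if a ∈ D then 1 else 0 := by
  simp only [DS, one_smul, coeff_sum, coeff_single, Finsupp.finsetSum_apply,
    Finsupp.single_apply, sum_ite_eq']

lemma coeff_zero_DS_one_mul_DS [DecidableEq G] (n : ℤ) (D : Finset G) :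
    (DS 1 D * DS n D).coeff 0 = #{g ∈ D | -(n • g) ∈ D} := by
  nth_rw 2 [DS]
  simp [mul_sum, coeff_sum, Finsupp.finsetSum_apply, coeff_mul_single_apply,
    coeff_DS_one, sum_boole]

variable [Fintype G]

lemma evalChar_GS (χ : AddChar G ℂ) : evalChar χ (GS G) = ∑ g, χ g := by
  simp [GS]

lemma evalChar_GS_of_ne_zero {χ : AddChar G ℂ} (hχ : χ ≠ 0) : evalChar χ (GS G) = 0 := by
  rw [evalChar_GS, AddChar.sum_eq_zero_iff_ne_zero.2 hχ]

lemma evalChar_apply (χ : AddChar G ℂ) (f : AddMonoidAlgebra ℤ G) :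
    evalChar χ f = ∑ a, (f.coeff a : ℂ) * χ a := by
  rw [evalChar, lift_apply, Finsupp.sum_fintype _ _ (by simp)]
  simp [zsmul_eq_mul]

lemma sum_evalChar (f : AddMonoidAlgebra ℤ G) :
    ∑ χ : AddChar G ℂ, evalChar χ f = Fintype.card G * (f.coeff 0 : ℂ) := by
  classical
  simp_rw [evalChar_apply, sum_comm (γ := AddChar G ℂ), ← mul_sum,
    AddChar.sum_apply_eq_ite, mul_ite, mul_zero, sum_ite_eq', mem_univ, if_true]
  ring

lemma eq_of_evalChar_eq {f f' : AddMonoidAlgebra ℤ G}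
    (h : ∀ χ : AddChar G ℂ, evalChar χ f = evalChar χ f') : f = f' := by
  rw [← sub_eq_zero]
  ext b
  have key := sum_evalChar ((f - f') * single (-b) 1)
  simp only [map_mul, map_sub, h, sub_self, zero_mul, sum_const_zero] at key
  exact_mod_cast (by simpa [Fintype.card_ne_zero] using key :
    ((f.coeff b - f'.coeff b : ℤ) : ℂ) = 0)

lemma eq_smul_one_add_smul_GS_iff {f : AddMonoidAlgebra ℤ G} {a b : ℤ} :
    f = a • 1 + b • GS G ↔
      evalChar 0 f = a + b * Fintype.card G ∧ ∀ χ : AddChar G ℂ, χ ≠ 0 → evalChar χ f = a := by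
  constructor
  · rintro rfl
    refine ⟨?_, fun χ hχ => ?_⟩
    · simp [evalChar_GS, zsmul_eq_mul]
    · simp [evalChar_GS_of_ne_zero hχ, zsmul_eq_mul]
  · rintro ⟨h0, h⟩
    refine eq_of_evalChar_eq fun χ => ?_
    rcases eq_or_ne χ 0 with rfl | hχ
    · simp [h0, evalChar_GS, zsmul_eq_mul]
    · simp [h χ hχ, evalChar_GS_of_ne_zero hχ, zsmul_eq_mul]

end AddMonoidAlgebra

lemma AddChar.isIntegral_sum {G : Type} [AddCommGroup G] [Fintype G] (χ : AddChar G ℂ)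
    (D : Finset G) : IsIntegral ℤ (∑ g ∈ D, χ g) :=
  IsIntegral.sum _ fun g _ => IsIntegral.of_pow Fintype.card_pos <| by
    rw [← AddChar.map_nsmul_eq_pow, card_nsmul_eq_zero, AddChar.map_zero_eq_one]
    exact isIntegral_one

lemma Complex.not_isIntegral_neg_half : ¬ IsIntegral ℤ ((-1 : ℂ) / 2) := by
  intro h
  have hℚ : IsIntegral ℤ ((-1 : ℚ) / 2) :=
    (isIntegral_algebraMap_iff (algebraMap ℚ ℂ).injective).1 (by simpa using h)
  obtain ⟨y, hy⟩ := IsIntegrallyClosed.isIntegral_iff.1 hℚ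
  have : (y : ℚ) * 2 = -1 := by rw [show (y : ℚ) = (-1 : ℚ) / 2 from hy]; ring
  have : y * 2 = -1 := by exact_mod_cast this
  omega

lemma AddChar.sum_ne_neg_half {G : Type} [AddCommGroup G] [Fintype G] (χ : AddChar G ℂ)
    (D : Finset G) : ∑ g ∈ D, χ g ≠ -1 / 2 := fun h =>
  Complex.not_isIntegral_neg_half (h ▸ χ.isIntegral_sum D)

lemma Int.pow_two_mul_add_one_modEq_neg_one_pow {p : ℕ} (hp : Odd p) (α : ℕ) :
    (p : ℤ) ^ (2 * α + 1) ≡ (-1) ^ ((p - 1) / 2) [ZMOD 4] := by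
  obtain ⟨m, rfl⟩ := hp
  rw [show (2 * m + 1 - 1) / 2 = m by omega, pow_succ, pow_mul]
  have hsq : ((2 * m + 1 : ℕ) : ℤ) ^ 2 ≡ 1 [ZMOD 4] :=
    (Int.modEq_iff_dvd.2 ⟨m ^ 2 + m, by push_cast; ring⟩).symm
  have hlin : ((2 * m + 1 : ℕ) : ℤ) ≡ (-1) ^ m [ZMOD 4] := by
    rcases m.even_or_odd with ⟨k, rfl⟩ | ⟨k, rfl⟩
    · rw [Even.neg_one_pow ⟨k, rfl⟩]
      exact (Int.modEq_iff_dvd.2 ⟨k, by push_cast; ring⟩).symm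
    · rw [Odd.neg_one_pow ⟨k, rfl⟩]
      exact (Int.modEq_iff_dvd.2 ⟨k + 1, by push_cast; ring⟩).symm
  simpa using (hsq.pow α).mul hlin

lemma gshds_four_mul_lam {ε v : ℤ} (hε : ε = 1 ∨ ε = -1) (hv : v ≡ ε [ZMOD 4]) :
    4 * ((v - 2 + ε) / 4) = v - 2 + ε := by
  rw [Int.ModEq] at hv
  rcases hε with rfl | rfl <;> omega

lemma gshds_four_mul_k₀_sub_lam {ε v : ℤ} (hε : ε = 1 ∨ ε = -1) (hv : v ≡ ε [ZMOD 4]) :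
    4 * ((1 - ε) / 2 * ((v - 1) / 2) - (v - 2 + ε) / 4) = 1 - ε * v := by
  rw [Int.ModEq] at hv
  rcases hε with rfl | rfl
  · norm_num; omega
  · norm_num; omega

lemma Int.eq_or_eq_neg_of_sum_sq_le {ι : Type*} {s : Finset ι} {x : ι → ℤ} {q : ℤ}
    (hdvd : ∀ i ∈ s, q ∣ x i) (hne : ∀ i ∈ s, x i ≠ 0) (hsum : ∑ i ∈ s, x i ^ 2 ≤ #s * q ^ 2) :
    ∀ i ∈ s, x i = q ∨ x i = -q := by
  have hle : ∀ i ∈ s, q ^ 2 ≤ x i ^ 2 := fun i hi =>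
    sq_le_sq.2 (Int.le_of_dvd (abs_pos.2 (hne i hi)) ((abs_dvd_abs _ _).2 (hdvd i hi)))
  have heq : ∑ i ∈ s, q ^ 2 = ∑ i ∈ s, x i ^ 2 :=
    le_antisymm (sum_le_sum hle) (by simpa using hsum)
  intro i hi
  exact sq_eq_sq_iff_eq_or_eq_neg.1 ((sum_eq_sum_iff_of_le hle).1 heq i hi).symm

section Skew

open AddMonoidAlgebra

variable {G : Type} [AddCommGroup G] [Fintype G] {D : Finset G} {n₀ : ℤ}

lemma two_mul_card_of_skew (hskew : DS 1 D + DS n₀ D = GS G - 1) :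
    2 * (#D : ℤ) = Fintype.card G - 1 := by
  have h := congrArg (evalChar 0) hskew
  simp only [map_add, map_sub, map_one, evalChar_zero_DS, evalChar_GS, AddChar.zero_apply,
    sum_const, card_univ, nsmul_eq_mul, mul_one] at h
  apply Int.cast_injective (α := ℂ)
  push_cast
  linear_combination h

lemma evalChar_DS_one_mul_DS_of_skew (hskew : DS 1 D + DS n₀ D = GS G - 1)
    {χ : AddChar G ℂ} (hχ : χ ≠ 0) {x : ℂ} (hx : ∑ g ∈ D, χ g = (-1 + x) / 2) :
    evalChar χ (DS 1 D * DS n₀ D) = (1 - x ^ 2) / 4 := by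
  have h := congrArg (evalChar χ) hskew
  simp only [map_add, map_sub, map_one, evalChar_GS_of_ne_zero hχ, evalChar_DS, one_smul] at h
  rw [map_mul, evalChar_DS, evalChar_DS]
  simp only [one_smul]
  rw [show ∑ g ∈ D, χ (n₀ • g) = -1 - ∑ g ∈ D, χ g by linear_combination h, hx]
  ring

lemma sum_erase_zero_of_skew (hskew : DS 1 D + DS n₀ D = GS G - 1) (t : AddChar G ℂ → ℤ)
    (ht : ∀ χ : AddChar G ℂ, χ ≠ 0 → evalChar χ (DS 1 D * DS n₀ D) = (1 - t χ) / 4) :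
    ∑ χ ∈ univ.erase 0, t χ = Fintype.card G * (Fintype.card G - 1) -
      4 * Fintype.card G * (DS 1 D * DS n₀ D).coeff 0 := by
  have hsum := sum_evalChar (DS 1 D * DS n₀ D)
  rw [← add_sum_erase _ _ (mem_univ 0), map_mul, evalChar_zero_DS, evalChar_zero_DS,
    sum_congr rfl fun χ hχ => ht χ (ne_of_mem_erase hχ), ← sum_div, sum_sub_distrib, sum_const,
    card_erase_of_mem (mem_univ 0), card_univ, AddChar.card_eq, nsmul_one,
    Nat.cast_sub Fintype.card_pos] at hsum
  have hD : (2 * #D : ℂ) = Fintype.card G - 1 := by exact_mod_cast two_mul_card_of_skew hskew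
  apply Int.cast_injective (α := ℂ)
  push_cast at hsum ⊢
  linear_combination (-4) * hsum + (2 * #D + Fintype.card G - 1 : ℂ) * hD

lemma abs_sum_erase_zero_le_of_skew (hskew : DS 1 D + DS n₀ D = GS G - 1)
    (t : AddChar G ℂ → ℤ)
    (ht : ∀ χ : AddChar G ℂ, χ ≠ 0 → evalChar χ (DS 1 D * DS n₀ D) = (1 - t χ) / 4) :
    |∑ χ ∈ univ.erase 0, t χ| ≤ Fintype.card G * (Fintype.card G - 1) := by
  classical
  rw [sum_erase_zero_of_skew hskew t ht, coeff_zero_DS_one_mul_DS]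
  have hN : #{g ∈ D | -(n₀ • g) ∈ D} ≤ #D := card_filter_le _ _
  have hD := two_mul_card_of_skew hskew
  have hv : (0 : ℤ) ≤ Fintype.card G := Nat.cast_nonneg _
  refine abs_le.2 ⟨?_, ?_⟩ <;> nlinarith

variable {s₀ : ℂ} {ε p : ℤ} {d : AddChar G ℂ → ℤ}

lemma evalChar_DS_one_mul_DS_of_skew_of_sq (hskew : DS 1 D + DS n₀ D = GS G - 1)
    (hs₀ : s₀ ^ 2 = ε * p)
    (hd : ∀ χ : AddChar G ℂ, χ ≠ 0 → ∑ g ∈ D, χ g = (-1 + d χ * s₀) / 2)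
    {χ : AddChar G ℂ} (hχ : χ ≠ 0) :
    evalChar χ (DS 1 D * DS n₀ D) = (1 - ((ε * p * d χ ^ 2 : ℤ) : ℂ)) / 4 := by
  rw [evalChar_DS_one_mul_DS_of_skew hskew hχ (hd χ hχ), mul_pow, hs₀]
  push_cast
  ring

lemma eq_or_eq_neg_of_dvd_of_skew (hskew : DS 1 D + DS n₀ D = GS G - 1)
    (hs₀ : s₀ ^ 2 = ε * p)
    (hd : ∀ χ : AddChar G ℂ, χ ≠ 0 → ∑ g ∈ D, χ g = (-1 + d χ * s₀) / 2)
    {q : ℤ} (hε : |ε| = 1) (hp : 0 < p) (hcard : (Fintype.card G : ℤ) = p * q ^ 2)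
    (hdvd : ∀ χ : AddChar G ℂ, χ ≠ 0 → q ∣ d χ) :
    ∀ χ : AddChar G ℂ, χ ≠ 0 → d χ = q ∨ d χ = -q := by
  have hne (χ : AddChar G ℂ) (hχ : χ ≠ 0) : d χ ≠ 0 := fun h0 =>
    χ.sum_ne_neg_half D (by rw [hd χ hχ, h0]; simp)
  have hbound := abs_sum_erase_zero_le_of_skew hskew _ fun χ hχ =>
    evalChar_DS_one_mul_DS_of_skew_of_sq hskew hs₀ hd hχ
  have hcardE : (#(univ.erase (0 : AddChar G ℂ)) : ℤ) = p * q ^ 2 - 1 := by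
    rw [card_erase_of_mem (mem_univ _), card_univ, AddChar.card_eq,
      Nat.cast_sub Fintype.card_pos, hcard, Nat.cast_one]
  have hT : 0 ≤ ∑ χ ∈ univ.erase 0, d χ ^ 2 := sum_nonneg fun χ _ => sq_nonneg (d χ)
  rw [← mul_sum, abs_mul, abs_mul, hε, abs_of_pos hp, abs_of_nonneg hT, hcard] at hbound
  refine fun χ hχ => Int.eq_or_eq_neg_of_sum_sq_le (fun ψ hψ => hdvd ψ (ne_of_mem_erase hψ))
    (fun ψ hψ => hne ψ (ne_of_mem_erase hψ)) ?_ χ (mem_erase.2 ⟨hχ, mem_univ χ⟩)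
  rw [hcardE]
  nlinarith

lemma DS_one_mul_DS_eq_iff_of_skew (hskew : DS 1 D + DS n₀ D = GS G - 1)
    (hs₀ : s₀ ^ 2 = ε * p)
    (hd : ∀ χ : AddChar G ℂ, χ ≠ 0 → ∑ g ∈ D, χ g = (-1 + d χ * s₀) / 2)
    {q k l : ℤ} (hε : ε ≠ 0) (hp : p ≠ 0) (hcard : (Fintype.card G : ℤ) = p * q ^ 2)
    (hk : 4 * (k - l) = 1 - ε * (p * q ^ 2)) (hl : 4 * l = p * q ^ 2 - 2 + ε) :
    DS 1 D * DS n₀ D = (k - l) • 1 + l • GS G ↔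
      ∀ χ : AddChar G ℂ, χ ≠ 0 → d χ = q ∨ d χ = -q := by
  have heval_zero : evalChar 0 (DS 1 D * DS n₀ D) = ↑(k - l) + ↑l * ↑(Fintype.card G) := by
    have hD := two_mul_card_of_skew hskew
    rw [hcard] at hD
    have h : (#D : ℤ) * #D = (k - l) + l * (p * q ^ 2) := by
      apply mul_left_cancel₀ (by norm_num : (4 : ℤ) ≠ 0)
      linear_combination (2 * #D + p * q ^ 2 - 1) * hD - hk - (p * q ^ 2) * hl
    have hcardC : (Fintype.card G : ℂ) = ((p * q ^ 2 : ℤ) : ℂ) := by exact_mod_cast hcard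
    rw [map_mul, evalChar_zero_DS, evalChar_zero_DS, hcardC]
    exact_mod_cast h
  have heval (χ : AddChar G ℂ) (hχ : χ ≠ 0) :
      evalChar χ (DS 1 D * DS n₀ D) = ↑(k - l) ↔ d χ ^ 2 = q ^ 2 := by
    have hcast : (1 - ((ε * p * d χ ^ 2 : ℤ) : ℂ)) / 4 = ((k - l : ℤ) : ℂ) ↔
        1 - ε * p * d χ ^ 2 = 4 * (k - l) := by
      rw [div_eq_iff (by norm_num), ← Int.cast_inj (α := ℂ)]
      push_cast
      constructor <;> intro h <;> linear_combination h
    rw [evalChar_DS_one_mul_DS_of_skew_of_sq hskew hs₀ hd hχ, hcast, hk, sub_right_inj,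
      ← mul_assoc, mul_right_inj' (mul_ne_zero hε hp)]
  rw [eq_smul_one_add_smul_GS_iff, and_iff_right heval_zero]
  exact forall₂_congr fun χ hχ => (heval χ hχ).trans sq_eq_sq_iff_eq_or_eq_neg

end Skew

theorem stmt_15_general (p α : ℕ) (hodd : Odd p)
    (G : Type) [AddCommGroup G] [Fintype G]
    (hcard : Fintype.card G = p ^ (2 * α + 1))
    (D : Finset G) (n₀ : ℤ)
    (hskew : DS 1 D + DS n₀ D = GS G - 1)
    (d : AddChar G ℂ → ℤ) (s0 : ℂ)
    (hs0 : s0 ^ 2 = (-1 : ℂ) ^ ((p - 1) / 2) * p)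
    (hd : ∀ χ : AddChar G ℂ, (∃ g : G, χ g ≠ 1) →
      (∑ g ∈ D, χ g) = (-1 + (d χ : ℂ) * s0) / 2)
    (ε v k₀ lam : ℤ)
    (hε : ε = (-1 : ℤ) ^ ((p - 1) / 2))
    (hv : v = (p : ℤ) ^ (2 * α + 1))
    (hk₀ : k₀ = ((1 - ε) / 2) * ((v - 1) / 2))
    (hlam : lam = (v - 2 + ε) / 4) :
    ((DS 1 D * DS n₀ D
        = (k₀ - lam) • (1 : AddMonoidAlgebra ℤ G) + lam • GS G) ↔
      (∀ χ : AddChar G ℂ, (∃ g : G, χ g ≠ 1) → (p : ℤ) ^ α ∣ d χ)) ∧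
    ((∀ χ : AddChar G ℂ, (∃ g : G, χ g ≠ 1) → (p : ℤ) ^ α ∣ d χ) →
      ∀ χ : AddChar G ℂ, (∃ g : G, χ g ≠ 1) →
        d χ = (p : ℤ) ^ α ∨ d χ = -((p : ℤ) ^ α)) := by
  simp only [← AddChar.ne_zero_iff] at hd ⊢
  set q : ℤ := (p : ℤ) ^ α
  have hp : (0 : ℤ) < p := by exact_mod_cast hodd.pos
  have hεpm : ε = 1 ∨ ε = -1 := hε ▸ neg_one_pow_eq_or ℤ _
  have hvε : v ≡ ε [ZMOD 4] := hv ▸ hε ▸ Int.pow_two_mul_add_one_modEq_neg_one_pow hodd α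
  have hvq : v = p * q ^ 2 := by rw [hv]; ring
  have hcardG : (Fintype.card G : ℤ) = p * q ^ 2 := by rw [hcard, ← hvq, hv]; push_cast; rfl
  have hs₀ : s0 ^ 2 = ε * ((p : ℤ) : ℂ) := by rw [hs0, hε]; push_cast; rfl
  have hpm_of_dvd := eq_or_eq_neg_of_dvd_of_skew hskew hs₀ hd
    (by rcases hεpm with rfl | rfl <;> rfl) hp hcardG
  have hGSHDS := DS_one_mul_DS_eq_iff_of_skew hskew hs₀ hd
    (by rcases hεpm with rfl | rfl <;> decide) hp.ne' hcardG
    (hvq ▸ hk₀ ▸ hlam ▸ gshds_four_mul_k₀_sub_lam hεpm hvε)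
    (hvq ▸ hlam ▸ gshds_four_mul_lam hεpm hvε)
  refine ⟨hGSHDS.trans ⟨fun h χ hχ => ?_, hpm_of_dvd⟩, hpm_of_dvd⟩
  rcases h χ hχ with h | h <;> simp [h]

/-- A QRS D in an abelian p-group G of order p^{2α+1} (p odd) is a GSHDS
if and only if p^α divides d_G(χ,D) for every nonprincipal χ; in that case
d_G(χ,D) = ±p^α for all nonprincipal χ. -/
theorem stmt_15 (p s α : ℕ) (hp : p.Prime) (hodd : Odd p)
    (G : Type) [AddCommGroup G] [Fintype G]
    (hcard : Fintype.card G = p ^ (2 * α + 1))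
    (hexp : AddMonoid.exponent G = p ^ s)
    (D : Finset G) (n₀ : ℤ)
    (hunit : IsUnit (n₀ : ZMod (p ^ s)))
    (hnres : ¬ ∃ m : ZMod (p ^ s), m ^ 2 = (n₀ : ZMod (p ^ s)))
    (hskew : DS 1 D + DS n₀ D = GS G - 1)
    (hinv : ∀ n : ℤ, IsUnit (n : ZMod (p ^ s)) →
      (∃ m : ZMod (p ^ s), m ^ 2 = (n : ZMod (p ^ s))) → DS n D = DS 1 D)
    (d : AddChar G ℂ → ℤ) (s0 : ℂ)
    (hs0 : s0 ^ 2 = (-1 : ℂ) ^ ((p - 1) / 2) * p)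
    (hd : ∀ χ : AddChar G ℂ, (∃ g : G, χ g ≠ 1) →
      (∑ g ∈ D, χ g) = (-1 + (d χ : ℂ) * s0) / 2)
    (ε v k₀ lam : ℤ)
    (hε : ε = (-1 : ℤ) ^ ((p - 1) / 2))
    (hv : v = (p : ℤ) ^ (2 * α + 1))
    (hk₀ : k₀ = ((1 - ε) / 2) * ((v - 1) / 2))
    (hlam : lam = (v - 2 + ε) / 4) :
    ((DS 1 D * DS n₀ D
        = (k₀ - lam) • (1 : AddMonoidAlgebra ℤ G) + lam • GS G) ↔
      (∀ χ : AddChar G ℂ, (∃ g : G, χ g ≠ 1) → (p : ℤ) ^ α ∣ d χ)) ∧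
    ((∀ χ : AddChar G ℂ, (∃ g : G, χ g ≠ 1) → (p : ℤ) ^ α ∣ d χ) →
      ∀ χ : AddChar G ℂ, (∃ g : G, χ g ≠ 1) →
        d χ = (p : ℤ) ^ α ∨ d χ = -((p : ℤ) ^ α)) :=
  stmt_15_general p α hodd G hcard D n₀ hskew d s0 hs0 hd ε v k₀ lam hε hv hk₀ hlam
end
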